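/- arXiv:1204.6512 — 3 statements merged into one kernel-verified Lean document; each statement's English description precedes it below -/
import Mathlib

section
/- For every h > 0 and every x ∈ ℝ, the lattice translates of Monaghan's modified B-spline form a partition of unity: ∑_{j ∈ ℤ} W₄(x − jh, h) = 1 (the sum is finite since W₄(·,h) vanishes outside (−2h, 2h)). -/
/-- Monaghan's modified cubic B-spline interpolation kernel `W₄`. -/
noncomputable def W4 (x h : ℝ) : ℝ :=
  let s := |x| / h
  if s ≤ 1 then 1 - 5/2 * s^2 + 3/2 * s^3
  else if s ≤ 2 then 1/2 * (2 - s)^2 * (1 - s)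
  else 0

lemma W4_neg_arg (x h : ℝ) : W4 (-x) h = W4 x h := by
  unfold W4; rw [abs_neg]

lemma W4_val {h : ℝ} (hh : 0 < h) {t : ℝ} (ht : 0 ≤ t) :
    W4 (t * h) h =
      if t ≤ 1 then 1 - 5/2 * t^2 + 3/2 * t^3
      else if t ≤ 2 then 1/2 * (2 - t)^2 * (1 - t)
      else 0 := by
  unfold W4
  rw [abs_mul, abs_of_nonneg ht, abs_of_pos hh, mul_div_cancel_right₀ _ hh.ne']

lemma W4_zero {h : ℝ} (hh : 0 < h) {t : ℝ} (ht : 2 ≤ t) :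
    W4 (t * h) h = 0 := by
  rw [W4_val hh (by linarith)]
  split_ifs with h1 h2
  · linarith
  · have : t = 2 := le_antisymm h2 ht
    rw [this]; ring
  · rfl

set_option maxHeartbeats 1000000 in
/-- The lattice translates of Monaghan's modified B-spline form a partition of unity. -/
theorem W4_partition_of_unity (h : ℝ) (hh : 0 < h) (x : ℝ) :
    ∑' j : ℤ, W4 (x - j * h) h = 1 := by
  set n : ℤ := ⌊x / h⌋ with hn
  have hu0 : (n : ℝ) ≤ x / h := Int.floor_le _
  have hu1 : x / h < n + 1 := Int.lt_floor_add_one _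
  set u : ℝ := x / h - n with hudef
  have h0u : 0 ≤ u := by rw [hudef]; linarith
  have hult : u < 1 := by rw [hudef]; linarith
  have hx : ∀ j : ℤ, x - j * h = (u + n - j) * h := by
    intro j
    have : x = (x / h) * h := by field_simp
    rw [hudef]; linarith [this]
  have hzero : ∀ j : ℤ, j ∉ ({n-1, n, n+1, n+2} : Finset ℤ) → W4 (x - j * h) h = 0 := by
    intro j hj
    simp only [Finset.mem_insert, Finset.mem_singleton] at hj
    push_neg at hj
    rw [hx j]
    rcases lt_or_ge (j : ℝ) (n : ℝ) with hc | hc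
    · -- j ≤ n - 2
      have hji : j ≤ n - 2 := by
        have : j < n := by exact_mod_cast hc
        omega
      have : (j : ℝ) ≤ (n : ℝ) - 2 := by exact_mod_cast hji
      exact W4_zero hh (by linarith)
    · -- j ≥ n + 3
      have hji : n + 3 ≤ j := by
        have : n ≤ j := by exact_mod_cast hc
        omega
      have hjr : (n : ℝ) + 3 ≤ (j : ℝ) := by exact_mod_cast hji
      rw [show (u + n - j) * h = -((j - n - u) * h) by ring, W4_neg_arg]
      exact W4_zero hh (by linarith)
  rw [tsum_eq_sum hzero]
  have e1 : ((n : ℤ) - 1 : ℤ) ∉ ({n, n+1, n+2} : Finset ℤ) := by simp; omega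
  have e2 : (n : ℤ) ∉ ({n+1, n+2} : Finset ℤ) := by simp
  have e3 : ((n : ℤ) + 1 : ℤ) ∉ ({n+2} : Finset ℤ) := by simp
  rw [show ({n-1, n, n+1, n+2} : Finset ℤ) = insert (n-1) (insert n (insert (n+1) {n+2})) from rfl,
    Finset.sum_insert e1, Finset.sum_insert e2, Finset.sum_insert e3, Finset.sum_singleton]
  rw [hx (n-1), hx n, hx (n+1), hx (n+2)]
  push_cast
  rw [show (u + n - (n - 1)) = u + 1 by ring,
      show (u + n - n) = u by ring,
      show (u + n - (n+1)) * h = -((1 - u) * h) by ring,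
      show (u + n - (n+2)) * h = -((2 - u) * h) by ring,
      W4_neg_arg, W4_neg_arg,
      W4_val hh (by linarith : (0:ℝ) ≤ u + 1),
      W4_val hh h0u,
      W4_val hh (by linarith : (0:ℝ) ≤ 1 - u),
      W4_val hh (by linarith : (0:ℝ) ≤ 2 - u)]
  split_ifs <;>
    first
      | (exfalso; linarith)
      | ring1
      | (have hu : u = 0 := le_antisymm (by linarith) h0u; linear_combination (u + 2*u^2) * hu)
end

section
/- For every h > 0, every polynomial q of degree at most 2, and every x ∈ ℝ, interpolation with Monaghan's modified B-spline reproduces q exactly: ∑_{j ∈ ℤ} q(jh) · W₄(x − jh, h) = q(x). -/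
open Set

lemma W4_eq_W4_div_one {h : ℝ} (hh : 0 ≤ h) (x : ℝ) : W4 x h = W4 (x / h) 1 := by
  simp only [W4, abs_div, abs_of_nonneg hh, div_one]

lemma W4_one_of_abs_le_one {y : ℝ} (hy : |y| ≤ 1) :
    W4 y 1 = 1 - 5/2 * |y|^2 + 3/2 * |y|^3 := by
  simp only [W4, div_one, if_pos hy]

lemma W4_one_of_one_le_abs_of_abs_le_two {y : ℝ} (hy₁ : 1 ≤ |y|) (hy₂ : |y| ≤ 2) :
    W4 y 1 = 1/2 * (2 - |y|)^2 * (1 - |y|) := by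
  rcases hy₁.eq_or_lt with hy | hy
  · rw [W4_one_of_abs_le_one hy.ge, ← hy]
    norm_num
  · simp only [W4, div_one, if_neg hy.not_ge, if_pos hy₂]

lemma W4_one_of_two_le_abs {y : ℝ} (hy : 2 ≤ |y|) : W4 y 1 = 0 := by
  rcases hy.eq_or_lt with hy | hy
  · rw [W4_one_of_one_le_abs_of_abs_le_two (by linarith) hy.ge, ← hy]
    norm_num
  · simp only [W4, div_one, if_neg (by linarith : ¬|y| ≤ 1), if_neg hy.not_ge]

lemma W4_one_sub_intCast_eq_zero {u : ℝ} (hu : u ∈ Icc 0 1) {j : ℤ}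
    (hj : j ∉ ({-1, 0, 1, 2} : Finset ℤ)) : W4 (u - j) 1 = 0 := by
  obtain ⟨hu₀, hu₁⟩ := hu
  simp only [Finset.mem_insert, Finset.mem_singleton, not_or] at hj
  rcases (by omega : j ≤ -2 ∨ 3 ≤ j) with hj | hj
  · have : (j : ℝ) ≤ -2 := by exact_mod_cast hj
    exact W4_one_of_two_le_abs (by rw [abs_of_nonneg (by linarith)]; linarith)
  · have : (3 : ℝ) ≤ j := by exact_mod_cast hj
    exact W4_one_of_two_le_abs (by rw [abs_of_nonpos (by linarith)]; linarith)

lemma tsum_mul_W4_one_add_sub (g : ℤ → ℝ) (n : ℤ) {u : ℝ} (hu : u ∈ Icc 0 1) :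
    ∑' j : ℤ, g j * W4 (n + u - j) 1
      = g (n - 1) * (-(u * (1 - u)^2) / 2) + g n * (1 - 5/2 * u^2 + 3/2 * u^3)
        + g (n + 1) * (1 - 5/2 * (1 - u)^2 + 3/2 * (1 - u)^3) + g (n + 2) * (u^2 * (u - 1) / 2) := by
  obtain ⟨hu₀, hu₁⟩ := hu
  rw [← (Equiv.addRight n).tsum_eq]
  have hshift : ∀ j : ℤ, (n : ℝ) + u - ↑(j + n) = u - j := fun j => by push_cast; ring
  simp only [Equiv.coe_addRight, hshift]
  have w₁ : W4 (u - (-1 : ℤ)) 1 = -(u * (1 - u)^2) / 2 := by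
    have hu : |u - (-1 : ℤ)| = u + 1 := by push_cast; rw [abs_of_nonneg (by linarith)]; ring
    rw [W4_one_of_one_le_abs_of_abs_le_two (by linarith) (by linarith), hu]
    ring
  have w₂ : W4 (u - (0 : ℤ)) 1 = 1 - 5/2 * u^2 + 3/2 * u^3 := by
    have hu : |u - (0 : ℤ)| = u := by push_cast; rw [sub_zero, abs_of_nonneg hu₀]
    rw [W4_one_of_abs_le_one (by linarith), hu]
  have w₃ : W4 (u - (1 : ℤ)) 1 = 1 - 5/2 * (1 - u)^2 + 3/2 * (1 - u)^3 := by
    have hu : |u - (1 : ℤ)| = 1 - u := by push_cast; rw [abs_of_nonpos (by linarith)]; ring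
    rw [W4_one_of_abs_le_one (by linarith), hu]
  have w₄ : W4 (u - (2 : ℤ)) 1 = u^2 * (u - 1) / 2 := by
    have hu : |u - (2 : ℤ)| = 2 - u := by push_cast; rw [abs_of_nonpos (by linarith)]; ring
    rw [W4_one_of_one_le_abs_of_abs_le_two (by linarith) (by linarith), hu]
    ring
  rw [tsum_eq_sum fun j hj => by rw [W4_one_sub_intCast_eq_zero ⟨hu₀, hu₁⟩ hj, mul_zero],
    Finset.sum_insert (by decide), Finset.sum_insert (by decide), Finset.sum_insert (by decide),
    Finset.sum_singleton, w₁, w₂, w₃, w₄]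
  simp only [add_comm _ n, ← sub_eq_add_neg, add_zero]
  ring

/-- Interpolation with Monaghan's modified B-spline reproduces every polynomial of
degree at most 2 exactly. -/
theorem W4_reproduces_quadratics (h : ℝ) (hh : 0 < h) (q : Polynomial ℝ)
    (hq : q.degree ≤ 2) (x : ℝ) :
    ∑' j : ℤ, q.eval (j * h) * W4 (x - j * h) h = q.eval x := by
  obtain ⟨n, u, hu, rfl⟩ : ∃ (n : ℤ) (u : ℝ), u ∈ Icc 0 1 ∧ x = (n + u) * h :=
    ⟨⌊x / h⌋, Int.fract (x / h), ⟨Int.fract_nonneg _, (Int.fract_lt_one _).le⟩,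
      by rw [Int.floor_add_fract, div_mul_cancel₀ x hh.ne']⟩
  have hW : ∀ j : ℤ, W4 ((n + u) * h - j * h) h = W4 (n + u - j) 1 := fun j => by
    rw [W4_eq_W4_div_one hh.le, ← sub_mul, mul_div_cancel_right₀ _ hh.ne']
  have hq_eval : ∀ y, q.eval y = q.coeff 0 + q.coeff 1 * y + q.coeff 2 * y^2 := fun y => by
    simp [Polynomial.eval_eq_sum_range' (Nat.lt_succ_of_le (Polynomial.natDegree_le_of_degree_le hq)),
      Finset.sum_range_succ]
  simp only [hW]
  rw [tsum_mul_W4_one_add_sub _ n hu]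
  simp only [hq_eval]
  push_cast
  ring
end

section
/- For every h₁, h₂ > 0 and every (x, y) ∈ ℝ², the tensor-product modified B-spline kernel forms a partition of unity on the two-dimensional lattice: ∑_{(j₁, j₂) ∈ ℤ²} W₄(x − j₁h₁, h₁) · W₄(y − j₂h₂, h₂) = 1. -/
/-!
For `t = x / h - ⌊x / h⌋ ∈ [0, 1)` only the four nodes `j = ⌊x / h⌋ - 1, …, ⌊x / h⌋ + 2` lie
within distance `2h` of `x`, at scaled distances `1 + t`, `t`, `1 - t`, `2 - t`; the four kernel
values there are cubics in `t` summing identically to `1`. So the one-dimensional lattice sum is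
a finite sum equal to `1`, and, the series being absolutely convergent, the lattice sum of the
tensor product kernel is the product of two one-dimensional sums.
-/

theorem HasSum.mul_of_finiteDimensional {ι κ R : Type*} [NormedRing R] [NormedAlgebra ℝ R]
    [FiniteDimensional ℝ R] {f : ι → R} {g : κ → R} {a b : R}
    (hf : HasSum f a) (hg : HasSum g b) :
    HasSum (fun p : ι × κ ↦ f p.1 * g p.2) (a * b) :=
  haveI := FiniteDimensional.complete ℝ R
  hf.mul hg <| summable_mul_of_summable_norm (summable_norm_iff.2 hf.summable)
    (summable_norm_iff.2 hg.summable)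

section W4

variable {x h : ℝ}

theorem W4_of_le_one (hs : |x| / h ≤ 1) :
    W4 x h = 1 - 5/2 * (|x| / h)^2 + 3/2 * (|x| / h)^3 := by
  simp [W4, hs]

theorem W4_of_one_le_of_le_two (hs₁ : 1 ≤ |x| / h) (hs₂ : |x| / h ≤ 2) :
    W4 x h = 1/2 * (2 - |x| / h)^2 * (1 - |x| / h) := by
  rcases hs₁.eq_or_lt with hs | hs
  · rw [W4_of_le_one hs.ge, ← hs]
    norm_num
  · simp [W4, hs.not_ge, hs₂]

theorem W4_of_two_le (hs : 2 ≤ |x| / h) : W4 x h = 0 := by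
  rcases hs.eq_or_lt with hs | hs
  · simp [W4, ← hs]
  · simp [W4, (one_lt_two.trans hs).not_ge, hs.not_ge]

theorem abs_sub_intCast_mul_div (hh : 0 < h) (j : ℤ) : |x - j * h| / h = |x / h - j| := by
  rw [← abs_of_pos hh, ← abs_div, abs_of_pos hh, sub_div, mul_div_cancel_right₀ _ hh.ne']

theorem W4_sub_intCast_mul_eq_zero (hh : 0 < h) {j : ℤ}
    (hj : j ∉ Finset.Icc (⌊x / h⌋ - 1) (⌊x / h⌋ + 2)) : W4 (x - j * h) h = 0 := by
  apply W4_of_two_le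
  rw [abs_sub_intCast_mul_div hh, le_abs]
  have hfloor_le : (⌊x / h⌋ : ℝ) ≤ x / h := Int.floor_le _
  have hlt_floor : x / h < ⌊x / h⌋ + 1 := Int.lt_floor_add_one _
  rw [Finset.mem_Icc, not_and_or, not_le, not_le] at hj
  rcases hj with hj | hj
  · have : (j : ℝ) ≤ ⌊x / h⌋ - 2 := by exact_mod_cast (by omega : j ≤ ⌊x / h⌋ - 2)
    left; linarith
  · have : (⌊x / h⌋ : ℝ) + 3 ≤ j := by exact_mod_cast (by omega : ⌊x / h⌋ + 3 ≤ j)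
    right; linarith

theorem sum_Icc_W4_sub_intCast_mul (hh : 0 < h) :
    ∑ j ∈ Finset.Icc (⌊x / h⌋ - 1) (⌊x / h⌋ + 2), W4 (x - j * h) h = 1 := by
  set n := ⌊x / h⌋
  set t := x / h - n
  have ht₀ : 0 ≤ t := sub_nonneg.2 (Int.floor_le _)
  have ht₁ : t < 1 := by linarith [Int.lt_floor_add_one (x / h)]
  have hIcc : Finset.Icc (n - 1) (n + 2) = {n - 1, n, n + 1, n + 2} := by
    ext j; simp only [Finset.mem_Icc, Finset.mem_insert, Finset.mem_singleton]; omega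
  have d₁ : |x - ↑(n - 1) * h| / h = 1 + t := by
    rw [abs_sub_intCast_mul_div hh, Int.cast_sub, Int.cast_one, abs_of_nonneg (by linarith)]; ring
  have d₂ : |x - n * h| / h = t := by
    rw [abs_sub_intCast_mul_div hh, abs_of_nonneg ht₀]
  have d₃ : |x - ↑(n + 1) * h| / h = 1 - t := by
    rw [abs_sub_intCast_mul_div hh, Int.cast_add, Int.cast_one, abs_of_nonpos (by linarith)]; ring
  have d₄ : |x - ↑(n + 2) * h| / h = 2 - t := by
    rw [abs_sub_intCast_mul_div hh, Int.cast_add, Int.cast_two, abs_of_nonpos (by linarith)]; ring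
  rw [hIcc, Finset.sum_insert (by simp; omega), Finset.sum_insert (by simp),
    Finset.sum_pair (by omega),
    W4_of_one_le_of_le_two (by linarith) (by linarith), W4_of_le_one (by linarith),
    W4_of_le_one (by linarith), W4_of_one_le_of_le_two (by linarith) (by linarith),
    d₁, d₂, d₃, d₄]
  ring

theorem hasSum_W4_sub_intCast_mul (hh : 0 < h) :
    HasSum (fun j : ℤ ↦ W4 (x - j * h) h) 1 :=
  sum_Icc_W4_sub_intCast_mul hh ▸
    hasSum_sum_of_ne_finset_zero fun _ hj ↦ W4_sub_intCast_mul_eq_zero hh hj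

end W4

/-- The tensor-product modified B-spline kernel forms a partition of unity on the
two-dimensional lattice. -/
theorem W4_tensor_partition_of_unity (h₁ h₂ : ℝ) (hh₁ : 0 < h₁) (hh₂ : 0 < h₂)
    (x y : ℝ) :
    ∑' j : ℤ × ℤ, W4 (x - j.1 * h₁) h₁ * W4 (y - j.2 * h₂) h₂ = 1 :=
  ((hasSum_W4_sub_intCast_mul hh₁).mul_of_finiteDimensional
    (hasSum_W4_sub_intCast_mul hh₂)).tsum_eq.trans (mul_one 1)
end
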